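/- Let G be a finite graph and let O be a blockage of order k−1 translated into separations: O = {(X,Y) ∈ S⃗_k : X ∈ B} where B is a blockage. Then O is a consistent orientation of S_k avoiding F_k^{(2)}, the set of stars in F_k of size at most 2. Conversely, if O is an F_k^{(2)}-tangle of S_k, then B = {X : (X,Y) ∈ O} is a blockage of order k−1. -/
import Mathlib


variable {V : Type*}

/-- The inverse of an oriented separation: `(A,B) ↦ (B,A)`. -/
def sInv (p : Set V × Set V) : Set V × Set V := (p.2, p.1)

/-- `(A,B) ≤ (C,D)` iff `A ⊆ C` and `B ⊇ D`. -/
def sLe (p q : Set V × Set V) : Prop := p.1 ⊆ q.1 ∧ q.2 ⊆ p.2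

/-- Strict version of `sLe`. -/
def sLt (p q : Set V × Set V) : Prop := sLe p q ∧ p ≠ q

/-- `(A,B)` is an (oriented) vertex separation of the graph `G`:
`A ∪ B = V` and `G` has no edge between `A \ B` and `B \ A`. -/
def GIsSep (G : SimpleGraph V) (p : Set V × Set V) : Prop :=
  p.1 ∪ p.2 = Set.univ ∧
    ∀ a b : V, a ∈ p.1 → a ∉ p.2 → b ∈ p.2 → b ∉ p.1 → ¬ G.Adj a b

/-- The order `|A ∩ B|` of a separation `(A,B)`. -/
noncomputable def sOrd (p : Set V × Set V) : ℕ := (p.1 ∩ p.2).ncard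

/-- `S⃗_k`: the oriented vertex separations of `G` of order `< k`. -/
def Sk (G : SimpleGraph V) (k : ℕ) : Set (Set V × Set V) :=
  {p | GIsSep G p ∧ sOrd p < k}

/-- A star of oriented separations: nondegenerate, pointing towards each other. -/
def IsStarP (σ : Set (Set V × Set V)) : Prop :=
  (∀ p ∈ σ, p ≠ sInv p) ∧ ∀ p ∈ σ, ∀ q ∈ σ, p ≠ q → sLe p (sInv q)

/-- `O` is an orientation of `S`: `O ⊆ S` contains exactly one orientation of
each separation in `S`. -/
def IsOrientation (S O : Set (Set V × Set V)) : Prop :=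
  O ⊆ S ∧ (∀ p ∈ S, p ∈ O ∨ sInv p ∈ O) ∧ ∀ p ∈ O, p ≠ sInv p → sInv p ∉ O

/-- `O` is consistent: it contains no orientations `p* , q` with `p < q` of
distinct underlying separations. -/
def Consistent (O : Set (Set V × Set V)) : Prop :=
  ¬ ∃ p q : Set V × Set V, ({p, sInv p} : Set (Set V × Set V)) ≠ {q, sInv q} ∧
      sLt p q ∧ sInv p ∈ O ∧ q ∈ O

/-- `O` avoids the family `F`: no subset of `O` lies in `F`. -/
def Avoids (O : Set (Set V × Set V)) (F : Set (Set (Set V × Set V))) : Prop :=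
  ¬ ∃ σ ∈ F, σ ⊆ O

/-- The family `T` of Robertson–Seymour: all (≤3-element) sets
`{p₁,p₂,p₃}` of oriented separations with `G[A₁] ∪ G[A₂] ∪ G[A₃] = G`. -/
def Tfam (G : SimpleGraph V) : Set (Set (Set V × Set V)) :=
  {σ | ∃ p₁ p₂ p₃ : Set V × Set V, GIsSep G p₁ ∧ GIsSep G p₂ ∧ GIsSep G p₃ ∧
    σ = {p₁, p₂, p₃} ∧ p₁.1 ∪ p₂.1 ∪ p₃.1 = Set.univ ∧
    ∀ u v : V, G.Adj u v →
      (u ∈ p₁.1 ∧ v ∈ p₁.1) ∨ (u ∈ p₂.1 ∧ v ∈ p₂.1) ∨ (u ∈ p₃.1 ∧ v ∈ p₃.1)}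

/-- The family `F_k`: stars of vertex separations `{(Aᵢ,Bᵢ)}` with
`|⋂ᵢ Bᵢ| < k`. -/
def FkFam (G : SimpleGraph V) (k : ℕ) : Set (Set (Set V × Set V)) :=
  {σ | IsStarP σ ∧ (∀ p ∈ σ, GIsSep G p) ∧ (⋂ p ∈ σ, p.2).ncard < k}

/-- `F_k^{(2)}`: the stars in `F_k` with at most 2 elements. -/
def Fk2 (G : SimpleGraph V) (k : ℕ) : Set (Set (Set V × Set V)) :=
  {σ | σ ∈ FkFam G k ∧ σ.ncard ≤ 2}

/-- `∂(X)`: the vertices of `X` with a neighbour outside `X`. -/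
def bdry (G : SimpleGraph V) (X : Set V) : Set V :=
  {x ∈ X | ∃ y, y ∉ X ∧ G.Adj x y}

/-- A blockage of order `k − 1`. -/
def IsBlockage (G : SimpleGraph V) (k : ℕ) (B : Set (Set V)) : Prop :=
  (∀ X ∈ B, (bdry G X).ncard < k) ∧
  (∀ X ∈ B, ∀ X' ⊆ X, (bdry G X').ncard < k → X' ∈ B) ∧
  (∀ X₁ X₂ : Set V, GIsSep G (X₁, X₂) → sOrd (X₁, X₂) < k →
    Xor' (X₁ ∈ B) (X₂ ∈ B))


section Helpers

variable {V : Type*}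

lemma mem_right_of_union_univ {X Y : Set V} (h : X ∪ Y = Set.univ) {v : V}
    (hv : v ∉ X) : v ∈ Y := by
  have hm : v ∈ X ∪ Y := h.symm ▸ Set.mem_univ v
  exact hm.resolve_left hv

lemma bdry_subset_inter {G : SimpleGraph V} {X Y : Set V} (h : GIsSep G (X, Y)) :
    bdry G X ⊆ X ∩ Y := by
  rintro x ⟨hxX, y, hyX, hadj⟩
  refine ⟨hxX, ?_⟩
  by_contra hxY
  exact h.2 x y hxX hxY (mem_right_of_union_univ h.1 hyX) hyX hadj

lemma sep_symm {G : SimpleGraph V} {p : Set V × Set V} (h : GIsSep G p) :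
    GIsSep G (sInv p) :=
  ⟨by rw [sInv]; rw [Set.union_comm]; exact h.1,
   fun a b ha hna hb hnb hadj => h.2 b a hb hnb ha hna hadj.symm⟩

lemma sep_canon (G : SimpleGraph V) (X : Set V) :
    GIsSep G (X, Xᶜ ∪ bdry G X) := by
  constructor
  · apply Set.eq_univ_of_forall
    intro v
    by_cases hv : v ∈ X
    · exact Or.inl hv
    · exact Or.inr (Or.inl hv)
  · intro a b ha hna hb hnb hadj
    exact hna (Or.inr ⟨ha, b, fun hbX => hnb (Or.elim hb (fun h => absurd hbX h) (fun _ => hbX)) , hadj⟩)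

lemma canon_inter (G : SimpleGraph V) (X : Set V) :
    X ∩ (Xᶜ ∪ bdry G X) = bdry G X := by
  ext v
  constructor
  · rintro ⟨hvX, hv⟩
    rcases hv with hv | hv
    · exact absurd hvX hv
    · exact hv
  · intro hv
    exact ⟨hv.1, Or.inr hv⟩

lemma canon_subset {G : SimpleGraph V} {X Y : Set V} (h : GIsSep G (X, Y)) :
    Xᶜ ∪ bdry G X ⊆ Y := by
  intro v hv
  rcases hv with hv | hv
  · exact mem_right_of_union_univ h.1 hv
  · exact (bdry_subset_inter h hv).2

end Helpers

/-- For a finite nonempty graph `G` and `k > 0`: if `B` is a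
blockage of order `k−1`, then `O = {(X,Y) ∈ S⃗_k : X ∈ B}` is a consistent
orientation of `S_k` avoiding `F_k^{(2)}`; conversely, if `O` is an
`F_k^{(2)}`-tangle of `S_k`, then `B = {X : (X,Y) ∈ O}` is a blockage of
order `k−1`. -/
theorem blockage_iff_Fk2_tangle {V : Type*} [Fintype V] [Nonempty V]
    (G : SimpleGraph V) (k : ℕ) (hk : 0 < k) :
    (∀ B : Set (Set V), IsBlockage G k B →
      IsOrientation (Sk G k) {p | p ∈ Sk G k ∧ p.1 ∈ B} ∧
      Consistent {p | p ∈ Sk G k ∧ p.1 ∈ B} ∧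
      Avoids {p | p ∈ Sk G k ∧ p.1 ∈ B} (Fk2 G k)) ∧
    (∀ O : Set (Set V × Set V),
      IsOrientation (Sk G k) O → Consistent O → Avoids O (Fk2 G k) →
      IsBlockage G k {X | ∃ Y, (X, Y) ∈ O}) := by
  constructor
  · -- Forward direction: blockage gives consistent orientation avoiding Fk2
    intro B hB
    obtain ⟨hB1, hB2, hB3⟩ := hB
    -- univ is not in B
    have huniv : (Set.univ : Set V) ∉ B := by
      intro hU
      have hbe : (bdry G (∅ : Set V)).ncard < k := by
        have : bdry G (∅ : Set V) = ∅ := by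
          ext x; simp [bdry]
        rw [this]; simpa using hk
      have h0 : (∅ : Set V) ∈ B := hB2 _ hU ∅ (Set.empty_subset _) hbe
      have hsep : GIsSep G ((∅ : Set V), Set.univ) :=
        ⟨by simp, fun a b ha => absurd ha (Set.notMem_empty a)⟩
      have hord : sOrd ((∅ : Set V), Set.univ) < k := by
        simp only [sOrd]
        simpa using hk
      rcases hB3 ∅ Set.univ hsep hord with ⟨_, h⟩ | ⟨_, h⟩
      · exact h hU
      · exact h h0
    -- every small set is in B
    have hsmall : ∀ X : Set V, X.ncard < k → X ∈ B := by
      intro X hX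
      have hsep : GIsSep G (Set.univ, X) :=
        ⟨Set.univ_union X, fun a b ha hna hb hnb => absurd (Set.mem_univ b) hnb⟩
      have hord : sOrd (Set.univ, X) < k := by
        simpa [sOrd] using hX
      rcases hB3 Set.univ X hsep hord with ⟨h, _⟩ | ⟨h, _⟩
      · exact absurd h huniv
      · exact h
    refine ⟨⟨fun p hp => hp.1, ?_, ?_⟩, ?_, ?_⟩
    · -- totality of the orientation
      intro p hp
      have hsep : GIsSep G p := hp.1
      have hord : sOrd p < k := hp.2
      have hordi : sOrd (sInv p) < k := by
        simpa [sOrd, sInv, Set.inter_comm] using hord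
      rcases hB3 p.1 p.2 hsep hord with ⟨h, _⟩ | ⟨h, _⟩
      · exact Or.inl ⟨hp, h⟩
      · exact Or.inr ⟨⟨sep_symm hsep, hordi⟩, h⟩
    · -- at most one orientation
      intro p hp hne hip
      have hsep : GIsSep G p := hp.1.1
      rcases hB3 p.1 p.2 hsep hp.1.2 with ⟨_, h⟩ | ⟨_, h⟩
      · exact h hip.2
      · exact h hp.2
    · -- consistency
      rintro ⟨p, q, hne, ⟨hle, hpq⟩, hip, hq⟩
      have hsepi : GIsSep G (sInv p) := hip.1.1
      have hsep : GIsSep G p := by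
        have := sep_symm hsepi
        simpa [sInv] using this
      have hord : sOrd p < k := by
        have := hip.1.2
        simpa [sOrd, sInv, Set.inter_comm] using this
      have hp2 : p.2 ∈ B := hip.2
      have hp1 : p.1 ∉ B := by
        rcases hB3 p.1 p.2 hsep hord with ⟨_, h⟩ | ⟨_, h⟩
        · exact absurd hp2 h
        · exact h
      apply hp1
      refine hB2 q.1 hq.2 p.1 hle.1 ?_
      calc (bdry G p.1).ncard ≤ (p.1 ∩ p.2).ncard :=
            Set.ncard_le_ncard (bdry_subset_inter hsep) (Set.toFinite _)
        _ < k := hord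
    · -- avoiding Fk2
      rintro ⟨σ, ⟨⟨hstar, hseps, hcap⟩, hcard⟩, hsub⟩
      rcases Set.eq_empty_or_nonempty σ with rfl | ⟨p, hpσ⟩
      · -- empty star: univ would be small
        simp only [Set.mem_empty_iff_false, Set.iInter_of_empty, Set.iInter_univ,
          Set.biInter_empty] at hcap
        have : (Set.univ : Set V) ∈ B := hsmall _ (by simpa using hcap)
        exact huniv this
      by_cases hσp : σ = {p}
      · -- singleton star
        subst hσp
        have hp := hsub (Set.mem_singleton p)
        have hsep : GIsSep G p := hp.1.1
        have hcap' : (p.2).ncard < k := by simpa using hcap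
        have hp2 : p.2 ∈ B := hsmall _ hcap'
        rcases hB3 p.1 p.2 hsep hp.1.2 with ⟨_, h⟩ | ⟨_, h⟩
        · exact h hp2
        · exact h hp.2
      · -- two-element star
        obtain ⟨q, hqσ, hqp⟩ : ∃ q ∈ σ, q ≠ p := by
          by_contra hc
          push_neg at hc
          exact hσp (Set.eq_singleton_iff_unique_mem.2 ⟨hpσ, hc⟩)
        have hpq : p ≠ q := hqp.symm
        have hσ : σ = {p, q} := by
          refine (Set.eq_of_subset_of_ncard_le ?_ ?_ (Set.toFinite _)).symm
          · intro r hr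
            rcases hr with rfl | hr
            · exact hpσ
            · rw [Set.mem_singleton_iff] at hr
              subst hr
              exact hqσ
          · rw [Set.ncard_pair hpq]; exact hcard
        subst hσ
        have hp := hsub hpσ
        have hq := hsub hqσ
        have hsepp : GIsSep G p := hp.1.1
        have hsepq : GIsSep G q := hq.1.1
        have hle := hstar.2 p hpσ q hqσ hpq
        have h1 : p.1 ⊆ q.2 := hle.1
        have h2 : q.1 ⊆ p.2 := hle.2
        set X := p.2 ∩ q.2 with hXdef
        have hX : X.ncard < k := by
          have : (⋂ r ∈ ({p, q} : Set (Set V × Set V)), r.2) = X := by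
            simp [hXdef]
          rwa [this] at hcap
        have hp2B : p.2 ∉ B := by
          rcases hB3 p.1 p.2 hsepp hp.1.2 with ⟨_, h⟩ | ⟨_, h⟩
          · exact h
          · exact absurd hp.2 h
        have hq2B : q.2 ∉ B := by
          rcases hB3 q.1 q.2 hsepq hq.1.2 with ⟨_, h⟩ | ⟨_, h⟩
          · exact h
          · exact absurd hq.2 h
        have hXp2 : X ⊆ p.2 := Set.inter_subset_left
        have hXq2 : X ⊆ q.2 := Set.inter_subset_right
        -- p.1 ∪ X ∈ B
        have hC1 : p.1 ∪ X ∈ B := by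
          have hsep' : GIsSep G (p.1 ∪ X, p.2) := by
            constructor
            · apply Set.eq_univ_of_forall
              intro v
              by_cases hv : v ∈ p.1
              · exact Or.inl (Or.inl hv)
              · exact Or.inr (mem_right_of_union_univ hsepp.1 hv)
            · intro a b ha hna hb hnb hadj
              have ha1 : a ∈ p.1 := by
                rcases ha with h | h
                · exact h
                · exact absurd (hXp2 h) hna
              exact hsepp.2 a b ha1 hna hb (fun h => hnb (Or.inl h)) hadj
          have hord' : sOrd (p.1 ∪ X, p.2) < k := by
            refine lt_of_le_of_lt (Set.ncard_le_ncard ?_ (Set.toFinite _)) hX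
            rintro v ⟨hv1, hv2⟩
            rcases hv1 with h | h
            · exact ⟨hv2, h1 h⟩
            · exact h
          rcases hB3 (p.1 ∪ X) p.2 hsep' hord' with ⟨h, _⟩ | ⟨h, _⟩
          · exact h
          · exact absurd h hp2B
        -- q.1 ∪ X ∈ B
        have hC2 : q.1 ∪ X ∈ B := by
          have hsep' : GIsSep G (q.1 ∪ X, q.2) := by
            constructor
            · apply Set.eq_univ_of_forall
              intro v
              by_cases hv : v ∈ q.1
              · exact Or.inl (Or.inl hv)
              · exact Or.inr (mem_right_of_union_univ hsepq.1 hv)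
            · intro a b ha hna hb hnb hadj
              have ha1 : a ∈ q.1 := by
                rcases ha with h | h
                · exact h
                · exact absurd (hXq2 h) hna
              exact hsepq.2 a b ha1 hna hb (fun h => hnb (Or.inl h)) hadj
          have hord' : sOrd (q.1 ∪ X, q.2) < k := by
            refine lt_of_le_of_lt (Set.ncard_le_ncard ?_ (Set.toFinite _)) hX
            rintro v ⟨hv1, hv2⟩
            rcases hv1 with h | h
            · exact ⟨h2 h, hv2⟩
            · exact h
          rcases hB3 (q.1 ∪ X) q.2 hsep' hord' with ⟨h, _⟩ | ⟨h, _⟩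
          · exact h
          · exact absurd h hq2B
        -- (p.1 ∪ X, q.1 ∪ X) is a separation of order < k, contradiction
        have hsepC : GIsSep G (p.1 ∪ X, q.1 ∪ X) := by
          constructor
          · apply Set.eq_univ_of_forall
            intro v
            by_cases hv1 : v ∈ p.1
            · exact Or.inl (Or.inl hv1)
            by_cases hv2 : v ∈ q.1
            · exact Or.inr (Or.inl hv2)
            have hvp2 : v ∈ p.2 := mem_right_of_union_univ hsepp.1 hv1
            have hvq2 : v ∈ q.2 := mem_right_of_union_univ hsepq.1 hv2
            exact Or.inl (Or.inr ⟨hvp2, hvq2⟩)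
          · intro a b ha hna hb hnb hadj
            have haX : a ∉ X := fun h => hna (Or.inr h)
            have hbX : b ∉ X := fun h => hnb (Or.inr h)
            have ha1 : a ∈ p.1 := by
              rcases ha with h | h
              · exact h
              · exact absurd h haX
            have hb1 : b ∈ q.1 := by
              rcases hb with h | h
              · exact h
              · exact absurd h hbX
            have hanp2 : a ∉ p.2 := fun h => haX ⟨h, h1 ha1⟩
            have hbp2 : b ∈ p.2 := h2 hb1
            have hbnp1 : b ∉ p.1 := fun h => hnb (Or.inl h)
            exact hsepp.2 a b ha1 hanp2 hbp2 hbnp1 hadj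
        have hordC : sOrd (p.1 ∪ X, q.1 ∪ X) < k := by
          refine lt_of_le_of_lt (Set.ncard_le_ncard ?_ (Set.toFinite _)) hX
          rintro v ⟨hv1, hv2⟩
          rcases hv1 with h | h
          · rcases hv2 with h' | h'
            · exact ⟨h2 h', h1 h⟩
            · exact h'
          · exact h
        rcases hB3 (p.1 ∪ X) (q.1 ∪ X) hsepC hordC with ⟨_, h⟩ | ⟨_, h⟩
        · exact h hC2
        · exact h hC1
  · -- Converse: an Fk2-tangle gives a blockage
    intro O hO hcons havoid
    obtain ⟨hsub, htot, huniq⟩ := hO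
    set B : Set (Set V) := {X | ∃ Y, (X, Y) ∈ O} with hBdef
    -- |V| ≥ k
    have hVk : ¬ (Set.univ : Set V).ncard < k := by
      intro hV
      apply havoid
      refine ⟨∅, ⟨⟨⟨?_, ?_⟩, ?_, ?_⟩, ?_⟩, Set.empty_subset _⟩
      · intro p hp; exact absurd hp (Set.notMem_empty p)
      · intro p hp; exact absurd hp (Set.notMem_empty p)
      · intro p hp; exact absurd hp (Set.notMem_empty p)
      · simpa using hV
      · simp
    -- no degenerate separations in Sk
    have hnondeg : ∀ p ∈ Sk G k, p ≠ sInv p := by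
      intro p hp heq
      have h12 : p.1 = p.2 := congrArg Prod.fst heq
      have h1u : p.1 = Set.univ := by
        have := hp.1.1
        rw [← h12, Set.union_self] at this
        exact this
      apply hVk
      have : sOrd p < k := hp.2
      rwa [sOrd, ← h12, Set.inter_self, h1u] at this
    -- no element of O has small second component
    have hsingle : ∀ p ∈ O, ¬ (p.2).ncard < k := by
      intro p hp hsmall
      apply havoid
      refine ⟨{p}, ⟨⟨⟨?_, ?_⟩, ?_, ?_⟩, ?_⟩, ?_⟩
      · intro r hr
        rcases hr with rfl
        exact hnondeg r (hsub hp)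
      · intro r hr s hs hrs
        rcases hr with rfl
        rcases hs with rfl
        exact absurd rfl hrs
      · intro r hr
        rcases hr with rfl
        exact (hsub hp).1
      · simpa using hsmall
      · simp
      · simpa using hp
    -- no star pair in O with small intersection
    have hpair : ∀ p q : Set V × Set V, p ∈ O → q ∈ O → p ≠ q →
        p.1 ⊆ q.2 → q.1 ⊆ p.2 → (p.2 ∩ q.2).ncard < k → False := by
      intro p q hp hq hpq h1 h2 hsmall
      apply havoid
      refine ⟨{p, q}, ⟨⟨⟨?_, ?_⟩, ?_, ?_⟩, ?_⟩, ?_⟩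
      · intro r hr
        rcases hr with rfl | rfl
        · exact hnondeg r (hsub hp)
        · exact hnondeg r (hsub hq)
      · intro r hr s hs hrs
        rcases hr with rfl | rfl <;> rcases hs with rfl | rfl
        · exact absurd rfl hrs
        · exact ⟨h1, h2⟩
        · exact ⟨h2, h1⟩
        · exact absurd rfl hrs
      · intro r hr
        rcases hr with rfl | rfl
        · exact (hsub hp).1
        · exact (hsub hq).1
      · simpa using hsmall
      · calc ({p, q} : Set (Set V × Set V)).ncard ≤ ({q} : Set (Set V × Set V)).ncard + 1 :=
              Set.ncard_insert_le p {q}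
          _ ≤ 2 := by rw [Set.ncard_singleton]
      · intro r hr
        rcases hr with rfl | rfl
        · exact hp
        · exact hq
    -- the canonical separation associated to X
    have hcanonSk : ∀ X : Set V, (bdry G X).ncard < k →
        (X, Xᶜ ∪ bdry G X) ∈ Sk G k := by
      intro X hbd
      refine ⟨sep_canon G X, ?_⟩
      show (X ∩ (Xᶜ ∪ bdry G X)).ncard < k
      rwa [canon_inter]
    -- L1: membership in O propagates to the canonical separation
    have hL1 : ∀ X Y : Set V, (X, Y) ∈ O → (X, Xᶜ ∪ bdry G X) ∈ O := by
      intro X Y hXY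
      have hXYSk : (X, Y) ∈ Sk G k := hsub hXY
      have hbd : (bdry G X).ncard < k := by
        refine lt_of_le_of_lt (Set.ncard_le_ncard (bdry_subset_inter hXYSk.1) (Set.toFinite _)) ?_
        exact hXYSk.2
      have hcSk := hcanonSk X hbd
      rcases htot _ hcSk with h | h
      · exact h
      · -- (Xᶜ ∪ bdry G X, X) ∈ O : contradiction via hpair
        exfalso
        have hq : (sInv (X, Xᶜ ∪ bdry G X)) ∈ O := h
        have hne : (X, Y) ≠ sInv (X, Xᶜ ∪ bdry G X) := by
          intro heq
          have h1 : X = Xᶜ ∪ bdry G X := congrArg Prod.fst heq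
          have hXu : X = Set.univ := by
            apply Set.eq_univ_of_forall
            intro v
            by_cases hv : v ∈ X
            · exact hv
            · exact h1 ▸ Or.inl hv
          have h2 : Y = X := congrArg Prod.snd heq
          have : (X, Y) = sInv (X, Y) := by
            subst h2; rfl
          exact hnondeg _ hXYSk this
        refine hpair (X, Y) (sInv (X, Xᶜ ∪ bdry G X)) hXY hq hne ?_ ?_ ?_
        · exact Set.Subset.rfl
        · exact canon_subset hXYSk.1
        · show (Y ∩ X).ncard < k
          rw [Set.inter_comm]
          exact hXYSk.2
    -- L2: transfer from canonical separation to any separation with same first side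
    have hL2 : ∀ X Y' : Set V, (X, Xᶜ ∪ bdry G X) ∈ O → GIsSep G (X, Y') →
        sOrd (X, Y') < k → (X, Y') ∈ O := by
      intro X Y' hcO hsep hord
      have hpSk : (X, Y') ∈ Sk G k := ⟨hsep, hord⟩
      rcases htot _ hpSk with h | h
      · exact h
      · exfalso
        by_cases hpO : (X, Y') ∈ O
        · exact huniq _ hpO (hnondeg _ hpSk) h
        apply hcons
        refine ⟨(X, Y'), (X, Xᶜ ∪ bdry G X), ?_, ⟨⟨Set.Subset.rfl, canon_subset hsep⟩, ?_⟩, h, hcO⟩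
        · -- distinct underlying separations
          intro heq
          have hmem : (X, Y') ∈ ({(X, Xᶜ ∪ bdry G X), sInv (X, Xᶜ ∪ bdry G X)} : Set (Set V × Set V)) := by
            rw [← heq]; exact Set.mem_insert _ _
          rcases hmem with heq' | heq'
          · exact hpO (heq' ▸ hcO)
          · have h1 : X = Xᶜ ∪ bdry G X := congrArg Prod.fst heq'
            have hXu : X = Set.univ := by
              apply Set.eq_univ_of_forall
              intro v
              by_cases hv : v ∈ X
              · exact hv
              · exact h1 ▸ Or.inl hv
            have hbe : bdry G X = ∅ := by
              ext x
              simp only [bdry, Set.mem_setOf_eq, Set.mem_empty_iff_false, iff_false, not_and]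
              rintro _ ⟨y, hy, _⟩
              exact hy (hXu ▸ Set.mem_univ y)
            rw [hbe, Set.union_empty, hXu, Set.compl_univ] at h1
            exact (Set.univ_nonempty).ne_empty h1
        · -- (X,Y') ≠ (X, Xᶜ ∪ bdry G X)
          intro heq
          exact hpO (heq ▸ hcO)
    -- X ∈ B implies canonical separation in O
    have hmemB : ∀ X : Set V, X ∈ B → (X, Xᶜ ∪ bdry G X) ∈ O := by
      rintro X ⟨Y, hY⟩
      exact hL1 X Y hY
    refine ⟨?_, ?_, ?_⟩
    · -- (B1)
      rintro X ⟨Y, hY⟩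
      have hXYSk := hsub hY
      exact lt_of_le_of_lt
        (Set.ncard_le_ncard (bdry_subset_inter hXYSk.1) (Set.toFinite _)) hXYSk.2
    · -- (B2)
      rintro X hX X' hX'X hbd'
      have hcO := hmemB X hX
      have hcSk' := hcanonSk X' hbd'
      rcases htot _ hcSk' with h | h
      · exact ⟨_, h⟩
      · exfalso
        -- h : (X'ᶜ ∪ bdry G X', X') ∈ O
        have hinvO : sInv (X', X'ᶜ ∪ bdry G X') ∈ O := h
        apply hcons
        refine ⟨(X', X'ᶜ ∪ bdry G X'), (X, Xᶜ ∪ bdry G X), ?_, ⟨⟨hX'X, ?_⟩, ?_⟩, hinvO, hcO⟩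
        · -- distinct underlying separations
          intro heq
          have hmem : (X', X'ᶜ ∪ bdry G X') ∈
              ({(X, Xᶜ ∪ bdry G X), sInv (X, Xᶜ ∪ bdry G X)} : Set (Set V × Set V)) := by
            rw [← heq]; exact Set.mem_insert _ _
          rcases hmem with heq' | heq'
          · -- p = q : then sInv q ∈ O and q ∈ O
            have : sInv (X, Xᶜ ∪ bdry G X) ∈ O := heq' ▸ hinvO
            exact huniq _ hcO (hnondeg _ (hsub hcO)) this
          · -- p = sInv q : forces X = univ, X' = ∅
            have h1 : X' = Xᶜ ∪ bdry G X := congrArg Prod.fst heq'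
            have hXu : X = Set.univ := by
              apply Set.eq_univ_of_forall
              intro v
              by_cases hv : v ∈ X
              · exact hv
              · exact hX'X (h1 ▸ Or.inl hv)
            have hbe : bdry G X = ∅ := by
              ext x
              simp only [bdry, Set.mem_setOf_eq, Set.mem_empty_iff_false, iff_false, not_and]
              rintro _ ⟨y, hy, _⟩
              exact hy (hXu ▸ Set.mem_univ y)
            have hX'e : X' = ∅ := by
              rw [h1, hbe, Set.union_empty, hXu, Set.compl_univ]
            apply hsingle _ hinvO
            show (X').ncard < k
            rw [hX'e]
            simpa using hk
        · -- Xᶜ ∪ bdry G X ⊆ X'ᶜ ∪ bdry G X'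
          intro v hv
          rcases hv with hv | hv
          · by_cases hv' : v ∈ X'
            · exact absurd (hX'X hv') hv
            · exact Or.inl hv'
          · obtain ⟨hvX, y, hyX, hadj⟩ := hv
            by_cases hv' : v ∈ X'
            · exact Or.inr ⟨hv', y, fun hy => hyX (hX'X hy), hadj⟩
            · exact Or.inl hv'
        · -- p ≠ q
          intro heq
          have : sInv (X, Xᶜ ∪ bdry G X) ∈ O := heq ▸ hinvO
          exact huniq _ hcO (hnondeg _ (hsub hcO)) this
    · -- (B3)
      intro X₁ X₂ hsep hord
      have hSk : (X₁, X₂) ∈ Sk G k := ⟨hsep, hord⟩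
      have hSk' : (X₂, X₁) ∈ Sk G k := by
        refine ⟨sep_symm hsep, ?_⟩
        show (X₂ ∩ X₁).ncard < k
        rwa [Set.inter_comm]
      have hBto : ∀ (hXB : X₁ ∈ B), (X₁, X₂) ∈ O := by
        intro hXB
        exact hL2 X₁ X₂ (hmemB X₁ hXB) hsep hord
      have hBto' : ∀ (hXB : X₂ ∈ B), (X₂, X₁) ∈ O := by
        intro hXB
        exact hL2 X₂ X₁ (hmemB X₂ hXB) hSk'.1 hSk'.2
      rcases htot _ hSk with h | h
      · refine Or.inl ⟨⟨X₂, h⟩, ?_⟩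
        intro hX₂B
        exact huniq _ h (hnondeg _ hSk) (hBto' hX₂B)
      · refine Or.inr ⟨⟨X₁, h⟩, ?_⟩
        intro hX₁B
        exact huniq _ (show (X₂, X₁) ∈ O from h) (hnondeg _ hSk') (hBto hX₁B)
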